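/- arXiv:2603.20924 — 6 statements merged into one kernel-verified Lean document; each statement's English description precedes it below -/
import Mathlib

section
/- For any rational q > 0 and any subset J ⊆ {1,...,n}, the principal submatrix of A(n,q) with rows and columns indexed by J is nonsingular (has nonzero determinant). -/
/-- The `q`-integer `(m)_q = 1 + q + ⋯ + q^{m-1}`. -/
def qint (q : ℚ) (m : ℕ) : ℚ := ∑ i ∈ Finset.range m, q ^ i

/-- The `q`-deformed type `A` Cartan matrix: diagonal `q+1`,
superdiagonal `-1`, subdiagonal `-q`. -/
def Aq (n : ℕ) (q : ℚ) : Matrix (Fin n) (Fin n) ℚ := fun i j =>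
  if (i : ℕ) = j then q + 1
  else if (i : ℕ) + 1 = j then -1
  else if (j : ℕ) + 1 = i then -q
  else 0

/-! The diagonal matrix `D = diag(q⁻ⁱ)` symmetrizes `A = A(n,q)`, and the quadratic form of `DA` is
`q x₀² + q^{-(n-1)} x_{n-1}² + ∑ q⁻ⁱ (xᵢ - x_{i+1})²`, which vanishes only at `x = 0`. So `DA` is
positive definite, hence so is each principal submatrix `(DA)_J = D_J A_J`; in particular
`det A_J ≠ 0`. -/

open Finset Matrix

theorem Matrix.det_submatrix_ne_zero_of_posDef_diagonal_mul {K m n : Type*}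
    [Field K] [PartialOrder K] [StarRing K] [Fintype m] [DecidableEq m] [Fintype n]
    [DecidableEq n] {A : Matrix n n K} {d : n → K} (hA : (diagonal d * A).PosDef)
    {e : m → n} (he : Function.Injective e) : (A.submatrix e e).det ≠ 0 := by
  have hsub : (diagonal d * A).submatrix e e = diagonal (d ∘ e) * A.submatrix e e := by
    ext i j
    simp [diagonal_mul]
  have hunit := (isUnit_iff_isUnit_det _).mp (hA.submatrix he).isUnit
  rw [hsub, det_mul] at hunit
  exact right_ne_zero_of_mul hunit.ne_zero

theorem mul_sq_add_sum_range_mul_sub_sq_pos {K : Type*} [CommRing K] [LinearOrder K]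
    [IsStrictOrderedRing K] {c : K} (hc : 0 < c) {w : ℕ → K} (hw : ∀ i, 0 < w i) {y : ℕ → K}
    {k : ℕ} (hk : y k ≠ 0) : 0 < c * y 0 ^ 2 + ∑ i ∈ range k, w i * (y i - y (i + 1)) ^ 2 := by
  induction k with
  | zero =>
    simp only [range_zero, sum_empty, add_zero]
    positivity
  | succ k ih =>
    have hnonneg : 0 ≤ ∑ i ∈ range k, w i * (y i - y (i + 1)) ^ 2 :=
      sum_nonneg fun i _ => mul_nonneg (hw i).le (sq_nonneg _)
    have hwk := hw k
    rw [sum_range_succ, ← add_assoc]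
    by_cases hyk : y k = 0
    · have hstep : y k - y (k + 1) ≠ 0 := by rwa [hyk, zero_sub, neg_ne_zero]
      positivity
    · have hprefix := ih hyk
      positivity

section AqEntry

variable {K : Type*} [Field K]

def aqEntry (q : K) (i j : ℕ) : K :=
  if i = j then q + 1 else if i + 1 = j then -1 else if j + 1 = i then -q else 0

theorem inv_pow_mul_aqEntry_comm {q : K} (hq : q ≠ 0) (i j : ℕ) :
    q⁻¹ ^ i * aqEntry q i j = q⁻¹ ^ j * aqEntry q j i := by
  unfold aqEntry
  split_ifs <;> first | omega | (subst_vars; simp [pow_succ, hq])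

theorem sum_range_mul_aqEntry_last (q : K) (f : ℕ → K) (m : ℕ) :
    ∑ i ∈ range (m + 1), f i * aqEntry q i (m + 1) = -f m := by
  rw [sum_eq_single_of_mem m (self_mem_range_succ m)]
  · simp [aqEntry]
  · intro i hi hne
    simp only [mem_range] at hi
    simp [aqEntry, hne, show i ≠ m + 1 by omega, show m + 1 + 1 ≠ i by omega]

theorem sum_range_aqEntry_last_mul (q : K) (f : ℕ → K) (m : ℕ) :
    ∑ j ∈ range (m + 1), aqEntry q (m + 1) j * f j = -q * f m := by
  rw [sum_eq_single_of_mem m (self_mem_range_succ m)]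
  · simp [aqEntry, show m + 1 + 1 ≠ m by omega]
  · intro j hj hne
    simp only [mem_range] at hj
    simp [aqEntry, hne, show m + 1 ≠ j by omega, show m + 1 + 1 ≠ j by omega]

theorem sum_range_inv_pow_mul_aqEntry {q : K} (hq : q ≠ 0) (y : ℕ → K) (m : ℕ) :
    ∑ i ∈ range (m + 1), ∑ j ∈ range (m + 1), q⁻¹ ^ i * y i * aqEntry q i j * y j =
      q * y 0 ^ 2 + q⁻¹ ^ m * y m ^ 2 + ∑ i ∈ range m, q⁻¹ ^ i * (y i - y (i + 1)) ^ 2 := by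
  induction m with
  | zero =>
    simp only [zero_add, range_one, sum_singleton, range_zero, sum_empty, add_zero, pow_zero]
    rw [aqEntry, if_pos rfl]
    ring
  | succ m ih =>
    have hcol : ∑ i ∈ range (m + 1), q⁻¹ ^ i * y i * aqEntry q i (m + 1) * y (m + 1) =
        -(q⁻¹ ^ m * y m) * y (m + 1) := by
      rw [← sum_mul, sum_range_mul_aqEntry_last]
    have hrow : ∑ j ∈ range (m + 1), q⁻¹ ^ (m + 1) * y (m + 1) * aqEntry q (m + 1) j * y j =
        q⁻¹ ^ (m + 1) * y (m + 1) * (-q * y m) := by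
      rw [← sum_range_aqEntry_last_mul, mul_sum]
      simp only [mul_assoc]
    have hdiag : aqEntry q (m + 1) (m + 1) = q + 1 := if_pos rfl
    simp only [sum_range_succ _ (m + 1), sum_add_distrib, ih, hcol, hrow, hdiag]
    rw [sum_range_succ _ m, pow_succ]
    linear_combination (q⁻¹ ^ m * y (m + 1) ^ 2 - q⁻¹ ^ m * y m * y (m + 1)) * mul_inv_cancel₀ hq

theorem sum_range_inv_pow_mul_aqEntry_pos [LinearOrder K] [IsStrictOrderedRing K] {q : K}
    (hq : 0 < q) {y : ℕ → K} {k m : ℕ} (hkm : k ≤ m) (hk : y k ≠ 0) :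
    0 < ∑ i ∈ range (m + 1), ∑ j ∈ range (m + 1), q⁻¹ ^ i * y i * aqEntry q i j * y j := by
  have hw : ∀ i, 0 < q⁻¹ ^ i := fun i => by positivity
  have hpos := mul_sq_add_sum_range_mul_sub_sq_pos hq hw hk
  have hmono : ∑ i ∈ range k, q⁻¹ ^ i * (y i - y (i + 1)) ^ 2 ≤
      ∑ i ∈ range m, q⁻¹ ^ i * (y i - y (i + 1)) ^ 2 :=
    sum_le_sum_of_subset_of_nonneg (range_subset_range.mpr hkm) fun i _ _ => by positivity
  have hlast := mul_nonneg (hw m).le (sq_nonneg (y m))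
  rw [sum_range_inv_pow_mul_aqEntry hq.ne']
  linarith

end AqEntry

theorem Aq_apply (n : ℕ) (q : ℚ) (i j : Fin n) : Aq n q i j = aqEntry q i j := rfl

theorem posDef_diagonal_inv_pow_mul_Aq {n : ℕ} {q : ℚ} (hq : 0 < q) :
    (diagonal (fun i : Fin n => q⁻¹ ^ (i : ℕ)) * Aq n q).PosDef := by
  refine .of_dotProduct_mulVec_pos (.ext fun i j => ?_) fun x hx => ?_
  · simpa only [diagonal_mul, Aq_apply, star_trivial] using inv_pow_mul_aqEntry_comm hq.ne' j i
  obtain ⟨k, hk⟩ := Function.ne_iff.mp hx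
  obtain ⟨m, rfl⟩ : ∃ m, n = m + 1 := ⟨n - 1, by have := k.pos; omega⟩
  obtain ⟨y, rfl⟩ : ∃ y : ℕ → ℚ, x = fun i : Fin (m + 1) => y i :=
    ⟨fun i => if h : i < m + 1 then x ⟨i, h⟩ else 0, by ext i; simp [i.isLt]⟩
  have hform : star (fun i : Fin (m + 1) => y i) ⬝ᵥ
      ((diagonal (fun i : Fin (m + 1) => q⁻¹ ^ (i : ℕ)) * Aq (m + 1) q) *ᵥ fun i => y i) =
      ∑ i ∈ range (m + 1), ∑ j ∈ range (m + 1), q⁻¹ ^ i * y i * aqEntry q i j * y j := by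
    simp only [dotProduct, mulVec, diagonal_mul, Aq_apply, star_trivial, mul_sum]
    rw [← Fin.sum_univ_eq_sum_range]
    refine sum_congr rfl fun i _ => ?_
    rw [← Fin.sum_univ_eq_sum_range]
    exact sum_congr rfl fun j _ => by ring
  rw [hform]
  exact sum_range_inv_pow_mul_aqEntry_pos hq (Nat.lt_succ_iff.mp k.isLt) hk

theorem det_Aq_submatrix_ne_zero_general (n : ℕ) (q : ℚ) (hq : 0 < q)
    (J : Finset (Fin n)) :
    ((Aq n q).submatrix (fun j : J => (j : Fin n)) (fun j : J => (j : Fin n))).det ≠ 0 :=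
  det_submatrix_ne_zero_of_posDef_diagonal_mul (posDef_diagonal_inv_pow_mul_Aq hq)
    Subtype.val_injective

theorem det_Aq_submatrix_ne_zero (n : ℕ) (q : ℚ) (hn : 1 ≤ n) (hq : 0 < q)
    (J : Finset (Fin n)) :
    ((Aq n q).submatrix (fun j : J => (j : Fin n)) (fun j : J => (j : Fin n))).det ≠ 0 :=
  det_Aq_submatrix_ne_zero_general n q hq J
end

section
/- For any rational q > 0, every entry of the inverse matrix A(n,q)^{-1} is strictly positive. -/
namespace qint

variable (q : ℚ)

@[simp] lemma zero : qint q 0 = 0 := rfl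

lemma succ (m : ℕ) : qint q (m + 1) = qint q m + q ^ m := Finset.sum_range_succ _ _

lemma succ' (m : ℕ) : qint q (m + 1) = q * qint q m + 1 := geom_sum_succ

lemma add (a b : ℕ) : qint q (a + b) = qint q a + q ^ a * qint q b := by
  simp only [qint, Finset.sum_range_add, Finset.mul_sum, pow_add]

lemma succ_succ (m : ℕ) : qint q (m + 2) = (q + 1) * qint q (m + 1) - q * qint q m := by
  linear_combination succ' q (m + 1) - succ' q m

lemma wronskian (a b : ℕ) :
    (q + 1) * qint q (a + 1) * qint q (b + 1) - q * qint q (a + 1) * qint q b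
      - q * qint q a * qint q (b + 1) = qint q (a + b + 2) := by
  rw [show a + b + 2 = (b + 1 + 1) + a by omega, add q (b + 1 + 1), succ' q (b + 1), succ' q a,
    pow_succ, succ q b]
  linear_combination (succ q b).symm.trans (succ' q b)

lemma pos {q : ℚ} (hq : 0 < q) {m : ℕ} (hm : 0 < m) : 0 < qint q m :=
  Finset.sum_pos (fun i _ => pow_pos hq i) (Finset.nonempty_range_iff.mpr hm.ne')

end qint

lemma Fin.sum_ite_succ_eq_mul {R : Type*} [Semiring R] {n : ℕ} (b : ℕ → R) (hb₀ : b 0 = 0)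
    (hb : b (n + 1) = 0) (c : R) {r : ℕ} (hr : r ≤ n + 1) :
    ∑ k : Fin n, (if (k : ℕ) + 1 = r then c else 0) * b (k + 1) = c * b r := by
  have hfull : ∑ m ∈ Finset.range (n + 2), (if m = r then c * b m else 0) = c * b r := by
    rw [Finset.sum_ite_eq']
    simp only [Finset.mem_range, if_pos (show r < n + 2 by omega)]
  rw [← hfull, Finset.sum_range_succ, Finset.sum_range_succ', Fin.sum_univ_eq_sum_range
    (fun k => (if k + 1 = r then c else 0) * b (k + 1))]
  simp [hb₀, hb, ite_mul]

namespace Aq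

variable {n : ℕ} {q : ℚ}

lemma apply_eq (i k : Fin n) :
    Aq n q i k = (if (k : ℕ) + 1 = i + 1 then q + 1 else 0)
      + (if (k : ℕ) + 1 = i + 2 then -1 else 0) + (if (k : ℕ) + 1 = i then -q else 0) := by
  unfold Aq
  split_ifs <;> first | omega | ring

lemma sum_mul_eq (b : ℕ → ℚ) (hb₀ : b 0 = 0) (hb : b (n + 1) = 0) (i : Fin n) :
    ∑ k, Aq n q i k * b (k + 1) = (q + 1) * b (i + 1) - b (i + 2) - q * b i := by
  have hi := i.isLt
  simp only [apply_eq, add_mul, Finset.sum_add_distrib,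
    Fin.sum_ite_succ_eq_mul b hb₀ hb _ (show (i : ℕ) + 1 ≤ n + 1 by omega),
    Fin.sum_ite_succ_eq_mul b hb₀ hb _ (show (i : ℕ) + 2 ≤ n + 1 by omega),
    Fin.sum_ite_succ_eq_mul b hb₀ hb _ (show (i : ℕ) ≤ n + 1 by omega)]
  ring

variable (n q) in
/-- Column `c` of `(n + 1)_q • (Aq n q)⁻¹`, rows and columns numbered from `1`, extended by zero
to the rows `0` and `n + 1`. -/
def green (c r : ℕ) : ℚ :=
  if r ≤ c then qint q r * qint q (n + 1 - c) else q ^ (r - c) * qint q c * qint q (n + 1 - r)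

lemma green_of_le {c r : ℕ} (h : r ≤ c) : green n q c r = qint q r * qint q (n + 1 - c) :=
  if_pos h

lemma green_of_ge {c r : ℕ} (h : c ≤ r) :
    green n q c r = q ^ (r - c) * qint q c * qint q (n + 1 - r) := by
  rcases h.eq_or_lt with rfl | h
  · simp [green]
  · exact if_neg (not_le.mpr h)

lemma green_zero (c : ℕ) : green n q c 0 = 0 := by
  simp [green_of_le (Nat.zero_le c)]

lemma green_succ_self {c : ℕ} (hc : c ≤ n + 1) : green n q c (n + 1) = 0 := by
  simp [green_of_ge hc]

lemma green_rec {c a : ℕ} (ha : a < n) :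
    (q + 1) * green n q c (a + 1) - green n q c (a + 2) - q * green n q c a
      = if a + 1 = c then qint q (n + 1) else 0 := by
  rcases lt_trichotomy (a + 1) c with h | rfl | h
  · rw [green_of_le h.le, green_of_le (by omega : a + 2 ≤ c), green_of_le (by omega : a ≤ c),
      if_neg h.ne]
    linear_combination -qint q (n + 1 - c) * qint.succ_succ q a
  · obtain ⟨b, rfl⟩ : ∃ b, n = a + 1 + b := ⟨n - (a + 1), by omega⟩
    rw [green_of_le le_rfl, green_of_ge (by omega : a + 1 ≤ a + 2),
      green_of_le (by omega : a ≤ a + 1), if_pos rfl,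
      show a + 1 + b + 1 - (a + 1) = b + 1 by omega,
      show a + 1 + b + 1 - (a + 2) = b by omega, show a + 2 - (a + 1) = 1 by omega, pow_one,
      show a + 1 + b + 1 = a + b + 2 by omega]
    linear_combination qint.wronskian q a b
  · obtain ⟨d, rfl⟩ : ∃ d, a = c + d := ⟨a - c, by omega⟩
    obtain ⟨m, rfl⟩ : ∃ m, n = c + d + 1 + m := ⟨n - (c + d + 1), by omega⟩
    rw [green_of_ge h.le, green_of_ge (by omega : c ≤ c + d + 2),
      green_of_ge (by omega : c ≤ c + d), if_neg h.ne',
      show c + d + 1 + m + 1 - (c + d + 1) = m + 1 by omega,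
      show c + d + 1 + m + 1 - (c + d + 2) = m by omega,
      show c + d + 1 + m + 1 - (c + d) = m + 2 by omega,
      show c + d + 1 - c = d + 1 by omega, show c + d + 2 - c = d + 2 by omega,
      Nat.add_sub_cancel_left]
    linear_combination -q ^ (d + 1) * qint q c * qint.succ_succ q m

lemma green_pos (hq : 0 < q) {c r : ℕ} (hc : 1 ≤ c) (hcn : c ≤ n) (hr : 1 ≤ r)
    (hrn : r ≤ n) :
    0 < green n q c r := by
  rcases le_total r c with h | h
  · rw [green_of_le h]
    exact mul_pos (qint.pos hq hr) (qint.pos hq (by omega))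
  · rw [green_of_ge h]
    exact mul_pos (mul_pos (pow_pos hq _) (qint.pos hq hc)) (qint.pos hq (by omega))

def greenMatrix (n : ℕ) (q : ℚ) : Matrix (Fin n) (Fin n) ℚ :=
  fun i j => green n q (j + 1) (i + 1) / qint q (n + 1)

lemma mul_greenMatrix (h : qint q (n + 1) ≠ 0) : Aq n q * greenMatrix n q = 1 := by
  ext i j
  have hi := i.isLt
  have hj := j.isLt
  have hcol :=
    sum_mul_eq (q := q) (green n q (j + 1)) (green_zero _) (green_succ_self (by omega)) i
  rw [green_rec hi] at hcol
  simp only [Matrix.mul_apply, greenMatrix, mul_div_assoc', ← Finset.sum_div, hcol,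
    Matrix.one_apply, Nat.add_right_cancel_iff, Fin.val_inj]
  split_ifs <;> simp [h]

end Aq

theorem Aq_inv_pos_general (n : ℕ) (q : ℚ) (hq : 0 < q) (i j : Fin n) :
    0 < (Aq n q)⁻¹ i j := by
  have hdet : 0 < qint q (n + 1) := qint.pos hq n.succ_pos
  rw [Matrix.inv_eq_right_inv (Aq.mul_greenMatrix hdet.ne')]
  exact div_pos (Aq.green_pos hq (by omega) (by omega) (by omega) (by omega)) hdet

theorem Aq_inv_pos (n : ℕ) (q : ℚ) (hn : 1 ≤ n) (hq : 0 < q) (i j : Fin n) :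
    0 < (Aq n q)⁻¹ i j :=
  Aq_inv_pos_general n q hq i j
end

section
/- For any rational q > 0 and any subset J ⊆ {1,...,n}, every entry of the inverse of the principal submatrix A(n,q)_J (rows and columns indexed by J) is nonnegative. -/
namespace Matrix

variable {ι κ R : Type*} [Fintype ι] [Fintype κ] [Field R] [LinearOrder R]
  [IsStrictOrderedRing R]

/-- The condition `exists_leak` is equivalent to weak chaining in the sense of Shivakumar–Chew:
every row reaches a row with positive sum along a path of negative entries. -/
structure IsChainedZMatrix (M : Matrix ι ι R) : Prop where
  offDiag_nonpos : ∀ i j, i ≠ j → M i j ≤ 0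
  sum_row_nonneg : ∀ i, 0 ≤ ∑ j, M i j
  exists_leak : ∀ S : Finset ι, S.Nonempty →
    ∃ i ∈ S, 0 < ∑ j, M i j ∨ ∃ j ∉ S, M i j < 0

theorem sum_row_le_sum_row_of_mem {M : Matrix ι ι R} (hM : ∀ i j, i ≠ j → M i j ≤ 0)
    {i : ι} {s : Finset ι} (hi : i ∈ s) : ∑ j, M i j ≤ ∑ j ∈ s, M i j :=
  Finset.sum_le_sum_of_subset_of_nonpos' s.subset_univ fun j _ hj =>
    hM i j (ne_of_mem_of_not_mem hi hj)

namespace IsChainedZMatrix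

variable {M : Matrix ι ι R}

theorem nonneg_of_nonneg_mulVec (hM : M.IsChainedZMatrix) {x : ι → R} (hx : 0 ≤ M *ᵥ x) :
    0 ≤ x := by
  by_contra hneg
  obtain ⟨i₀, hi₀⟩ : ∃ i, x i < 0 := by simpa [Pi.le_def] using hneg
  obtain ⟨k, -, hk⟩ := Finset.univ.exists_min_image x ⟨i₀, Finset.mem_univ _⟩
  set m := x k
  have hm : m < 0 := (hk i₀ (Finset.mem_univ _)).trans_lt hi₀
  obtain ⟨i, hiS, hleak⟩ := hM.exists_leak {j | x j = m} ⟨k, by simp [m]⟩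
  have hxi : x i = m := by simpa using hiS
  -- shifting `x` by its minimum `m` splits `(M *ᵥ x) i` into two nonpositive parts
  have hsplit : (M *ᵥ x) i = ∑ j, M i j * (x j - m) + m * ∑ j, M i j := by
    simp only [mulVec, dotProduct, mul_sub, Finset.sum_sub_distrib, ← Finset.sum_mul]
    ring
  have hterm : ∀ j, M i j * (x j - m) ≤ 0 := fun j => by
    rcases eq_or_ne i j with rfl | hij
    · simp [hxi]
    · exact mul_nonpos_of_nonpos_of_nonneg (hM.offDiag_nonpos i j hij)
        (sub_nonneg.2 (hk j (Finset.mem_univ _)))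
  have hlt : (M *ᵥ x) i < 0 := by
    rw [hsplit]
    rcases hleak with hpos | ⟨j, hjS, hMij⟩
    · exact add_neg_of_nonpos_of_neg (Finset.sum_nonpos fun j _ => hterm j)
        (mul_neg_of_neg_of_pos hm hpos)
    · have hxj : m < x j :=
        lt_of_le_of_ne (hk j (Finset.mem_univ _)) (by simpa [eq_comm] using hjS)
      exact add_neg_of_neg_of_nonpos
        (Finset.sum_neg' (fun j _ => hterm j)
          ⟨j, Finset.mem_univ _, mul_neg_of_neg_of_pos hMij (sub_pos.2 hxj)⟩)
        (mul_nonpos_of_nonpos_of_nonneg hm.le (hM.sum_row_nonneg i))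
  exact (hx i).not_gt hlt

theorem isUnit_det [DecidableEq ι] (hM : M.IsChainedZMatrix) : IsUnit M.det := by
  refine isUnit_iff_ne_zero.2 fun hdet => ?_
  obtain ⟨v, hv0, hv⟩ := exists_mulVec_eq_zero_iff.2 hdet
  have hpos : 0 ≤ v := hM.nonneg_of_nonneg_mulVec hv.ge
  have hneg : 0 ≤ -v := hM.nonneg_of_nonneg_mulVec (by rw [mulVec_neg, hv, neg_zero])
  exact hv0 (le_antisymm (neg_nonneg.1 hneg) hpos)

theorem inv_nonneg [DecidableEq ι] (hM : M.IsChainedZMatrix) (i j : ι) : 0 ≤ M⁻¹ i j := by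
  have hcol : M *ᵥ (M⁻¹ *ᵥ Pi.single j 1) = Pi.single j 1 := by
    rw [mulVec_mulVec, mul_nonsing_inv M hM.isUnit_det, one_mulVec]
  have := hM.nonneg_of_nonneg_mulVec (hcol ▸ Pi.single_nonneg.2 zero_le_one) i
  simpa [mulVec_single_one] using this

theorem submatrix (hM : M.IsChainedZMatrix) {e : κ → ι} (he : Function.Injective e) :
    (M.submatrix e e).IsChainedZMatrix := by
  classical
  have hrow (i : κ) : ∑ k, M.submatrix e e i k = ∑ j ∈ Finset.univ.map ⟨e, he⟩, M (e i) j := by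
    simp
  refine ⟨fun i k hik => hM.offDiag_nonpos _ _ (he.ne hik), fun i => ?_, fun S hS => ?_⟩
  · rw [hrow]
    exact (hM.sum_row_nonneg _).trans (sum_row_le_sum_row_of_mem hM.offDiag_nonpos (by simp))
  · obtain ⟨_, hiS, hleak⟩ := hM.exists_leak (S.map ⟨e, he⟩) hS.map
    obtain ⟨i, hi, rfl⟩ := Finset.mem_map.1 hiS
    rw [Function.Embedding.coeFn_mk] at hleak
    refine ⟨i, hi, ?_⟩
    rw [hrow]
    rcases hleak with hpos | ⟨j, hjS, hMj⟩
    · exact .inl (hpos.trans_le (sum_row_le_sum_row_of_mem hM.offDiag_nonpos (by simp)))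
    · by_cases hj : ∃ k, e k = j
      · obtain ⟨k, rfl⟩ := hj
        exact .inr ⟨k, fun hk => hjS (Finset.mem_map_of_mem _ hk), hMj⟩
      · push Not at hj
        left
        have hle := sum_row_le_sum_row_of_mem hM.offDiag_nonpos
          (Finset.mem_insert_of_mem (a := e i) (b := j) (by simp : e i ∈ Finset.univ.map ⟨e, he⟩))
        rw [Finset.sum_insert (by simpa using hj)] at hle
        linarith [hM.sum_row_nonneg (e i)]

end IsChainedZMatrix

end Matrix

theorem Finset.sum_range_ite_add_one_eq {M : Type*} [AddCommMonoid M] {n m : ℕ} (hm : m ≤ n)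
    (a : M) :
    ∑ k ∈ Finset.range n, (if k + 1 = m then a else 0) = if 0 < m then a else 0 := by
  cases m with
  | zero => simp
  | succ m => simp [Finset.sum_ite_eq', show m < n by omega]

theorem Aq_apply_offDiag_nonpos {n : ℕ} {q : ℚ} (hq : 0 ≤ q) {i j : Fin n} (hij : i ≠ j) :
    Aq n q i j ≤ 0 := by
  have : (i : ℕ) ≠ j := Fin.val_ne_of_ne hij
  unfold Aq
  split_ifs <;> first | linarith | (exfalso; omega)

theorem sum_Aq_row (n : ℕ) (q : ℚ) (i : Fin n) :
    ∑ j, Aq n q i j =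
      q + 1 - (if (i : ℕ) + 1 < n then 1 else 0) - (if 0 < (i : ℕ) then q else 0) := by
  set g : ℕ → ℚ := fun k => (if k = i then q + 1 else 0) - (if k = i + 1 then 1 else 0)
    - (if k + 1 = i then q else 0)
  have hg : ∀ j, Aq n q i j = g j := fun j => by
    simp only [Aq, g]
    split_ifs <;> first | (exfalso; omega) | ring
  simp only [hg, Fin.sum_univ_eq_sum_range g, g, Finset.sum_sub_distrib, Finset.sum_ite_eq',
    Finset.mem_range, i.isLt, if_true, Finset.sum_range_ite_add_one_eq i.isLt.le]

theorem isChainedZMatrix_Aq {n : ℕ} {q : ℚ} (hq : 0 ≤ q) : (Aq n q).IsChainedZMatrix where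
  offDiag_nonpos _ _ := Aq_apply_offDiag_nonpos hq
  sum_row_nonneg i := by
    rw [sum_Aq_row]
    split_ifs <;> linarith
  exists_leak S hS := by
    -- the last row of `S` is either the last row of `A` or has its successor outside `S`
    refine ⟨S.max' hS, S.max'_mem hS, ?_⟩
    by_cases hlast : (S.max' hS : ℕ) + 1 < n
    · refine .inr ⟨⟨_, hlast⟩, fun hmem => ?_, by simp [Aq]⟩
      have hle := Fin.le_def.1 (S.le_max' _ hmem)
      simp only at hle
      omega
    · refine .inl ?_
      rw [sum_Aq_row, if_neg hlast]
      split_ifs <;> linarith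

theorem Aq_submatrix_inv_nonneg_general (n : ℕ) (q : ℚ) (hq : 0 < q)
    (J : Finset (Fin n)) (i j : J) :
    0 ≤ ((Aq n q).submatrix (fun a : J => (a : Fin n)) (fun a : J => (a : Fin n)))⁻¹ i j :=
  ((isChainedZMatrix_Aq hq.le).submatrix Subtype.val_injective).inv_nonneg i j

theorem Aq_submatrix_inv_nonneg (n : ℕ) (q : ℚ) (hn : 1 ≤ n) (hq : 0 < q)
    (J : Finset (Fin n)) (i j : J) :
    0 ≤ ((Aq n q).submatrix (fun a : J => (a : Fin n)) (fun a : J => (a : Fin n)))⁻¹ i j :=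
  Aq_submatrix_inv_nonneg_general n q hq J i j
end

section
/- In the q-Klyachko algebra Kly_{n,q}, for each generator u_i the element u_i^2 can be rewritten as (u_i u_{i+1} + q u_i u_{i-1})/(q+1); consequently every element of Kly_{n,q} is a Q-linear combination of square-free monomials in u_1, ..., u_n. -/
open MvPolynomial in
/-- `klyGen n q k` is `X_{k-1}` (the `k`-th generator, 1-indexed) when `1 ≤ k ≤ n`,
and `0` otherwise (the convention `u_0 = u_{n+1} = 0`). -/
noncomputable def klyGen (n : ℕ) (q : ℚ) (k : ℕ) : MvPolynomial (Fin n) ℚ :=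
  if h : 1 ≤ k ∧ k ≤ n then X ⟨k - 1, by omega⟩ else 0

/-- The ideal of `q`-Klyachko relations `(q+1)u_i² - u_i u_{i+1} - q u_i u_{i-1}`. -/
noncomputable def klyIdeal (n : ℕ) (q : ℚ) : Ideal (MvPolynomial (Fin n) ℚ) :=
  Ideal.span ((fun i => (q + 1) • klyGen n q i ^ 2 - klyGen n q i * klyGen n q (i + 1)
      - q • (klyGen n q i * klyGen n q (i - 1))) '' (Set.Icc 1 n))

/-- The `q`-Klyachko algebra `Kly_{n,q}`. -/
noncomputable def Kly (n : ℕ) (q : ℚ) : Type :=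
  MvPolynomial (Fin n) ℚ ⧸ klyIdeal n q

noncomputable instance (n : ℕ) (q : ℚ) : CommRing (Kly n q) :=
  Ideal.Quotient.commRing _

noncomputable instance (n : ℕ) (q : ℚ) : Algebra ℚ (Kly n q) :=
  Ideal.Quotient.algebra _

/-- The class of the generator `u_k` (1-indexed) in `Kly_{n,q}`. -/
noncomputable def klyU (n : ℕ) (q : ℚ) (k : ℕ) : Kly n q :=
  Ideal.Quotient.mk (klyIdeal n q) (klyGen n q k)

open Finset MvPolynomial Finsupp

/-!
The square rule is the defining relation divided by `q + 1`. For the spanning statement it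
suffices to show that a linear functional `ψ` on polynomials which kills the ideal and every
squarefree monomial kills every monomial. When `σ j ≥ 2` the relations read
`(q + 1) ψ(x^σ) = ψ(x^{σ - e_j + e_{j+1}}) + q ψ(x^{σ - e_j + e_{j-1}})` (a missing neighbour
contributing `0`), a weakly diagonally dominant system on the monomials of a fixed degree since
`q > 0`. Take a monomial maximising `|ψ|` and, among those, the weight `∑ i σ_i`; if `ψ` does not
vanish there, the relation forces its right neighbour to attain the same maximum with a larger
weight.
-/

theorem eq_zero_of_forall_exists_abs_le_of_lt {α β γ : Type*} [AddCommGroup β] [LinearOrder β]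
    [IsOrderedAddMonoid β] [LinearOrder γ] (s : Finset α) (f : α → β) (w : α → γ)
    (h : ∀ σ ∈ s, f σ ≠ 0 → (∀ τ ∈ s, |f τ| ≤ |f σ|) → ∃ τ ∈ s, |f σ| ≤ |f τ| ∧ w σ < w τ) :
    ∀ σ ∈ s, f σ = 0 := by
  by_contra! ⟨σ₀, hσ₀, hf₀⟩
  obtain ⟨σ, hσ, hmax⟩ := s.exists_max_image (fun τ => toLex (|f τ|, w τ)) ⟨σ₀, hσ₀⟩
  have habs : ∀ τ ∈ s, |f τ| ≤ |f σ| := fun τ hτ => (Prod.Lex.toLex_le_toLex'.mp (hmax τ hτ)).1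
  have hfσ : f σ ≠ 0 := abs_pos.mp ((abs_pos.mpr hf₀).trans_le (habs σ₀ hσ₀))
  obtain ⟨τ, hτ, hle, hlt⟩ := h σ hσ hfσ habs
  exact (hmax τ hτ).not_gt (Prod.Lex.toLex_lt_toLex'.mpr ⟨hle, fun _ => hlt⟩)

theorem MvPolynomial.monomial_one_eq_prod_support {σ R : Type*} [CommSemiring R] {s : σ →₀ ℕ}
    (hs : ∀ i, s i ≤ 1) : monomial s (1 : R) = ∏ i ∈ s.support, X i := by
  rw [monomial_eq, C_1, one_mul, Finsupp.prod]
  refine prod_congr rfl fun i hi => ?_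
  rw [le_antisymm (hs i) (Nat.one_le_iff_ne_zero.mpr (Finsupp.mem_support_iff.mp hi)), pow_one]

theorem MvPolynomial.monomial_one_mul_X {σ R : Type*} [CommSemiring R] (s : σ →₀ ℕ) (i : σ) :
    monomial s (1 : R) * X i = monomial (s + single i 1) 1 := by
  rw [X, monomial_mul, mul_one]

namespace Kly

variable {n : ℕ} {q : ℚ}

theorem klyGen_succ (i : Fin n) : klyGen n q (i + 1) = X i := by
  rw [klyGen, dif_pos ⟨by omega, by omega⟩]
  rfl

theorem klyGen_eq_zero_or (k : ℕ) :
    klyGen n q k = 0 ∨ ∃ i : Fin n, (i : ℕ) + 1 = k ∧ klyGen n q k = X i := by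
  by_cases hk : 1 ≤ k ∧ k ≤ n
  · obtain ⟨m, rfl⟩ : ∃ m, k = m + 1 := ⟨k - 1, by omega⟩
    exact Or.inr ⟨⟨m, by omega⟩, rfl, klyGen_succ ⟨m, by omega⟩⟩
  · exact Or.inl (dif_neg hk)

theorem relation_mem_klyIdeal (j : Fin n) :
    (q + 1) • X j ^ 2 - X j * klyGen n q (j + 2) - q • (X j * klyGen n q j) ∈ klyIdeal n q := by
  refine Ideal.subset_span ⟨j + 1, ⟨by omega, by omega⟩, ?_⟩
  simp only [klyGen_succ, Nat.add_sub_cancel, add_assoc, Nat.reduceAdd]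

theorem klyU_sq (hq : 0 < q) {i : ℕ} (hi : i ∈ Set.Icc 1 n) :
    klyU n q i ^ 2 =
      ((q + 1)⁻¹ : ℚ) • (klyU n q i * klyU n q (i + 1) + q • (klyU n q i * klyU n q (i - 1))) := by
  have hrel := Ideal.Quotient.eq_zero_iff_mem.mpr (Ideal.subset_span ⟨i, hi, rfl⟩ :
    (q + 1) • klyGen n q i ^ 2 - klyGen n q i * klyGen n q (i + 1)
      - q • (klyGen n q i * klyGen n q (i - 1)) ∈ klyIdeal n q)
  rw [← Ideal.Quotient.mkₐ_eq_mk ℚ] at hrel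
  simp only [map_sub, map_smul, map_mul, map_pow, Ideal.Quotient.mkₐ_eq_mk] at hrel
  rw [sub_sub, sub_eq_zero] at hrel
  have hsq : (q + 1) • klyU n q i ^ 2
      = klyU n q i * klyU n q (i + 1) + q • (klyU n q i * klyU n q (i - 1)) := hrel
  rw [← hsq, smul_smul, inv_mul_cancel₀ (by positivity), one_smul]

theorem monomial_mul_klyGen_eq_zero_or (m : Fin n →₀ ℕ) (k : ℕ) :
    monomial m 1 * klyGen n q k = 0 ∨
      ∃ i : Fin n, (i : ℕ) + 1 = k ∧ monomial m 1 * klyGen n q k = monomial (m + single i 1) 1 := by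
  rcases klyGen_eq_zero_or k with h | ⟨i, hik, h⟩
  · exact Or.inl (by rw [h, mul_zero])
  · exact Or.inr ⟨i, hik, by rw [h, monomial_one_mul_X]⟩

section Functional

variable (ψ : MvPolynomial (Fin n) ℚ →ₗ[ℚ] ℚ)

theorem functional_relation (hI : ∀ p ∈ klyIdeal n q, ψ p = 0) (c : Fin n →₀ ℕ) (j : Fin n) :
    (q + 1) * ψ (monomial (c + single j 2) 1) =
      ψ (monomial (c + single j 1) 1 * klyGen n q (j + 2)) +
        q * ψ (monomial (c + single j 1) 1 * klyGen n q j) := by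
  have h := hI _ (Ideal.mul_mem_left _ (monomial c 1) (relation_mem_klyIdeal j))
  have hsq : monomial c (1 : ℚ) * X j ^ 2 = monomial (c + single j 2) 1 := by
    rw [X_pow_eq_monomial, monomial_mul, mul_one]
  rw [mul_sub, mul_sub, mul_smul_comm, mul_smul_comm, hsq, ← mul_assoc, ← mul_assoc,
    monomial_one_mul_X] at h
  simp only [map_sub, map_smul, smul_eq_mul] at h
  linarith

theorem exists_abs_le_and_weight_lt (hq : 0 < q) (hI : ∀ p ∈ klyIdeal n q, ψ p = 0)
    (hsf : ∀ S : Finset (Fin n), ψ (∏ i ∈ S, X i) = 0) {d : ℕ} {σ : Fin n →₀ ℕ}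
    (hσ : σ ∈ finsuppAntidiag univ d) (hψσ : ψ (monomial σ 1) ≠ 0)
    (hmax : ∀ τ ∈ finsuppAntidiag univ d, |ψ (monomial τ 1)| ≤ |ψ (monomial σ 1)|) :
    ∃ τ ∈ finsuppAntidiag univ d, |ψ (monomial σ 1)| ≤ |ψ (monomial τ 1)| ∧
      weight (fun i : Fin n => (i : ℕ)) σ < weight (fun i : Fin n => (i : ℕ)) τ := by
  obtain ⟨j, hj⟩ : ∃ j, 2 ≤ σ j := by
    by_contra! h
    exact hψσ (by rw [monomial_one_eq_prod_support fun i => by grind, hsf])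
  obtain ⟨c, rfl⟩ : ∃ c, σ = c + single j 2 :=
    ⟨σ - single j 2, (tsub_add_cancel_of_le (single_le_iff.mpr hj)).symm⟩
  set m := c + single j 1
  have hdeg : ∀ i, m + single i 1 ∈ finsuppAntidiag univ d := by
    intro i
    simp only [mem_finsuppAntidiag, ← degree_eq_sum, subset_univ, and_true] at hσ ⊢
    simp only [m, ← hσ, map_add, degree_single]
  have hbound : ∀ k, |ψ (monomial m 1 * klyGen n q k)| ≤ |ψ (monomial (c + single j 2) 1)| := by
    intro k
    rcases monomial_mul_klyGen_eq_zero_or m k with h | ⟨i, -, h⟩ <;> rw [h]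
    · simp
    · exact hmax _ (hdeg i)
  have hup : |ψ (monomial (c + single j 2) 1)| ≤ |ψ (monomial m 1 * klyGen n q (j + 2))| := by
    have hrel := congrArg abs (functional_relation ψ hI c j)
    rw [abs_mul, abs_of_pos (by linarith : 0 < q + 1)] at hrel
    have htri := hrel.trans_le (abs_add_le _ _)
    rw [abs_mul, abs_of_pos hq] at htri
    nlinarith [hbound j]
  rcases monomial_mul_klyGen_eq_zero_or m (j + 2) with h | ⟨i, hi, h⟩
  · rw [h, map_zero, abs_zero, abs_nonpos_iff] at hup
    exact absurd hup hψσ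
  · refine ⟨m + single i 1, hdeg i, h ▸ hup, ?_⟩
    simp only [m, map_add, weight_single, smul_eq_mul]
    omega

theorem functional_eq_zero (hq : 0 < q) (hI : ∀ p ∈ klyIdeal n q, ψ p = 0)
    (hsf : ∀ S : Finset (Fin n), ψ (∏ i ∈ S, X i) = 0) : ψ = 0 := by
  refine (basisMonomials (Fin n) ℚ).ext fun σ => ?_
  rw [coe_basisMonomials, LinearMap.zero_apply]
  refine eq_zero_of_forall_exists_abs_le_of_lt (finsuppAntidiag univ (degree σ))
    (fun τ => ψ (monomial τ 1)) (weight fun i : Fin n => (i : ℕ))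
    (fun τ hτ => exists_abs_le_and_weight_lt ψ hq hI hsf hτ) σ ?_
  simp [degree_eq_sum]

end Functional

theorem span_squarefree_eq_top (hq : 0 < q) :
    Submodule.span ℚ (Set.range fun S : Finset (Fin n) =>
      Ideal.Quotient.mk (klyIdeal n q) (∏ i ∈ S, X i)) = ⊤ := by
  by_contra h
  obtain ⟨φ, hφ, hmap⟩ := Submodule.exists_dual_map_eq_bot_of_lt_top (lt_top_iff_ne_top.mpr h)
    inferInstance
  refine hφ (LinearMap.ext fun x => ?_)
  obtain ⟨p, rfl⟩ := Ideal.Quotient.mk_surjective x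
  have hψ := functional_eq_zero (φ ∘ₗ (Ideal.Quotient.mkₐ ℚ (klyIdeal n q)).toLinearMap) hq
    (fun p hp => by simp [Ideal.Quotient.eq_zero_iff_mem.mpr hp])
    (fun S => (Submodule.mem_bot ℚ).mp
      (hmap ▸ Submodule.mem_map_of_mem (Submodule.subset_span ⟨S, rfl⟩)))
  exact LinearMap.congr_fun hψ p

end Kly

theorem kly_squares_and_squarefree_span_general (n : ℕ) (q : ℚ) (hq : 0 < q) :
    (∀ i ∈ Set.Icc 1 n,
      klyU n q i ^ 2 =
        ((q + 1)⁻¹ : ℚ) • (klyU n q i * klyU n q (i + 1) + q • (klyU n q i * klyU n q (i - 1)))) ∧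
    Submodule.span ℚ
      (Set.range fun S : Finset (Fin n) =>
        Ideal.Quotient.mk (klyIdeal n q) (∏ i ∈ S, X i)) = ⊤ :=
  ⟨fun _ hi => Kly.klyU_sq hq hi, Kly.span_squarefree_eq_top hq⟩

open MvPolynomial in
theorem kly_squares_and_squarefree_span (n : ℕ) (q : ℚ) (hn : 1 ≤ n) (hq : 0 < q) :
    (∀ i ∈ Set.Icc 1 n,
      klyU n q i ^ 2 =
        ((q + 1)⁻¹ : ℚ) • (klyU n q i * klyU n q (i + 1) + q • (klyU n q i * klyU n q (i - 1)))) ∧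
    Submodule.span ℚ
      (Set.range fun S : Finset (Fin n) =>
        Ideal.Quotient.mk (klyIdeal n q) (∏ i ∈ S, X i)) = ⊤ :=
  kly_squares_and_squarefree_span_general n q hq
end

section
/- The vectors e_i (standard basis vectors of R^n, i ∈ J) together with -α_k (negatives of the columns of A(n,q), k ∈ K), for disjoint subsets J, K ⊆ {1,...,n}, are linearly independent; hence the cone σ_{J,K} = cone{e_i : i ∈ J} + cone{-α_k : k ∈ K} is a simplicial cone of dimension |J| + |K|. -/
/-!
A relation `∑_{j ∈ J} c_j e_j = ∑_{k ∈ K} d_k α_k` says `c = A d` for vectors `c`, `d` supported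
on the disjoint sets `J` and `K`, so `dᵀ A d = dᵀ c = 0`. The symmetric part of `A(n,q)` is
`(q+1)/2` times the Cartan matrix of type `A_{n-1}`, whose quadratic form
`2 ∑ x_i² - 2 ∑ x_i x_{i+1} = x_1² + ∑ (x_i - x_{i+1})² + x_n²` is positive definite.
Hence `d = 0`, and then `c = A d = 0`.
-/

open Matrix Finset

namespace Matrix

variable {R ι : Type*} [CommRing R] [Fintype ι]

theorem dotProduct_add_transpose_mulVec (M : Matrix ι ι R) (x : ι → R) :
    x ⬝ᵥ (M + Mᵀ) *ᵥ x = 2 * (x ⬝ᵥ M *ᵥ x) := by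
  rw [add_mulVec, dotProduct_add, mulVec_transpose, dotProduct_comm x (x ᵥ* M),
    ← dotProduct_mulVec]
  ring

variable [DecidableEq ι]

theorem toQuadraticForm'_apply (M : Matrix ι ι R) (x : ι → R) :
    M.toQuadraticForm' x = x ⬝ᵥ M *ᵥ x :=
  toLinearMap₂'_apply' M x x

theorem linearIndependent_sumElim_single_neg_col (M : Matrix ι ι R)
    (hM : M.toQuadraticForm'.Anisotropic) {J K : Finset ι} (hJK : Disjoint J K) :
    LinearIndependent R (Sum.elim (fun i : J => Pi.single (i : ι) (1 : R))
      (fun k : K => -(fun i => M i k))) := by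
  have hstd (s : Finset ι) :
      LinearIndependent R fun i : s => (Pi.single (i : ι) (1 : R) : ι → R) :=
    (Pi.linearIndependent_single_one ι R).comp ((↑) : s → ι) Subtype.val_injective
  rw [Fintype.linearIndependent_iff]
  intro g hg
  set c : ι → R := ∑ i : J, g (.inl i) • Pi.single (i : ι) 1
  set d : ι → R := ∑ k : K, g (.inr k) • Pi.single (k : ι) 1
  have hcd : c = M *ᵥ d := by
    rw [Fintype.sum_sum_type] at hg
    simp only [Sum.elim_inl, Sum.elim_inr, smul_neg, sum_neg_distrib, ← sub_eq_add_neg,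
      sub_eq_zero] at hg
    simp only [d, mulVec_sum, mulVec_smul, mulVec_single_one]
    exact hg
  have hdc : d ⬝ᵥ c = 0 := by
    simp only [d, sum_dotProduct, smul_dotProduct, single_one_dotProduct]
    refine sum_eq_zero fun k _ => ?_
    have hck : c k = 0 := by
      simp only [c, Finset.sum_apply, Pi.smul_apply, Pi.single_apply]
      exact sum_eq_zero fun i _ => by rw [if_neg (hJK.forall_ne_finset i.2 k.2).symm, smul_zero]
    rw [hck, smul_zero]
  have hd : d = 0 := hM d (by rw [toQuadraticForm'_apply, ← hcd, hdc])
  have hc : c = 0 := by rw [hcd, hd, mulVec_zero]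
  rintro (i | k)
  · exact Fintype.linearIndependent_iff.1 (hstd J) _ hc i
  · exact Fintype.linearIndependent_iff.1 (hstd K) _ hd k

end Matrix

theorem eq_zero_of_sq_add_sum_sq_sub_succ_eq_zero {R : Type*} [CommRing R] [LinearOrder R]
    [IsStrictOrderedRing R] {n : ℕ} {e : ℕ → R}
    (h : e 0 ^ 2 + ∑ i ∈ range n, (e i - e (i + 1)) ^ 2 = 0) : ∀ i ≤ n, e i = 0 := by
  obtain ⟨h0, hsum⟩ := (add_eq_zero_iff_of_nonneg (sq_nonneg _)
    (sum_nonneg fun i _ => sq_nonneg (e i - e (i + 1)))).1 h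
  have hstep : ∀ i < n, e (i + 1) = e i := fun i hi => by
    have hsq := (sum_eq_zero_iff_of_nonneg fun i _ => sq_nonneg (e i - e (i + 1))).1 hsum i
      (mem_range.2 hi)
    linear_combination -(pow_eq_zero_iff two_ne_zero).1 hsq
  intro i hi
  induction i with
  | zero => exact (pow_eq_zero_iff two_ne_zero).1 h0
  | succ i ih => rw [hstep i hi, ih (by omega)]

namespace CartanMatrix

variable {R : Type*} [CommRing R] {n : ℕ}

theorem map_A_apply (i j : Fin n) :
    (A n).map (Int.cast : ℤ → R) i j = 2 * (if (i : ℕ) = j then 1 else 0)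
      - (if (i : ℕ) + 1 = j then 1 else 0) - (if (j : ℕ) + 1 = i then 1 else 0) := by
  simp only [A, map_apply, of_apply, Fin.ext_iff]
  split_ifs <;> first | omega | push_cast; ring

theorem dotProduct_map_A_mulVec (e : ℕ → R) (he : ∀ i, n ≤ i → e i = 0) :
    (fun i : Fin n => e i) ⬝ᵥ (A n).map (Int.cast : ℤ → R) *ᵥ (fun i => e i) =
      e 0 ^ 2 + ∑ i ∈ range n, (e i - e (i + 1)) ^ 2 := by
  have hdiag : ∑ i ∈ range n, ∑ j ∈ range n, (if i = j then e i * e j else 0) =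
      ∑ i ∈ range n, e i ^ 2 :=
    sum_congr rfl fun i hi => by rw [sum_ite_eq, if_pos hi, sq]
  have hsup : ∑ i ∈ range n, ∑ j ∈ range n, (if i + 1 = j then e i * e j else 0) =
      ∑ i ∈ range n, e i * e (i + 1) := by
    refine sum_congr rfl fun i _ => ?_
    rw [sum_ite_eq]
    split_ifs with h
    · rfl
    · rw [he (i + 1) (by simpa using h), mul_zero]
  have hsub : ∑ i ∈ range n, ∑ j ∈ range n, (if j + 1 = i then e i * e j else 0) =
      ∑ i ∈ range n, e i * e (i + 1) := by
    rw [sum_comm, ← hsup]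
    exact sum_congr rfl fun _ _ => sum_congr rfl fun _ _ => by rw [mul_comm]
  have hshift : ∑ i ∈ range n, e (i + 1) ^ 2 + e 0 ^ 2 = ∑ i ∈ range n, e i ^ 2 := by
    rw [← sum_range_succ' (fun i => e i ^ 2), sum_range_succ, he n le_rfl, sq, mul_zero, add_zero]
  calc (fun i : Fin n => e i) ⬝ᵥ (A n).map (Int.cast : ℤ → R) *ᵥ (fun i => e i)
      = ∑ i ∈ range n, ∑ j ∈ range n, (2 * (if i = j then e i * e j else 0)
          - (if i + 1 = j then e i * e j else 0) - (if j + 1 = i then e i * e j else 0)) := by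
        simp only [dotProduct, mulVec, map_A_apply, mul_sum]
        rw [← Fin.sum_univ_eq_sum_range]
        refine sum_congr rfl fun i _ => ?_
        rw [← Fin.sum_univ_eq_sum_range]
        refine sum_congr rfl fun j _ => ?_
        split_ifs <;> ring
    _ = 2 * ∑ i ∈ range n, e i ^ 2 - 2 * ∑ i ∈ range n, e i * e (i + 1) := by
        simp only [sum_sub_distrib, ← mul_sum, hdiag, hsup, hsub]
        ring
    _ = _ := by
        simp only [sub_sq, sum_add_distrib, sum_sub_distrib, mul_assoc, ← mul_sum]
        linear_combination -hshift

variable [LinearOrder R] [IsStrictOrderedRing R]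

theorem posDef_toQuadraticForm'_map_A : ((A n).map (Int.cast : ℤ → R)).toQuadraticForm'.PosDef := by
  intro x hx
  set e : ℕ → R := fun i => if h : i < n then x ⟨i, h⟩ else 0
  have hxe : x = fun i : Fin n => e i := funext fun i => by simp [e]
  have he : ∀ i, n ≤ i → e i = 0 := fun i hi => dif_neg (not_lt.2 hi)
  rw [toQuadraticForm'_apply, hxe, dotProduct_map_A_mulVec e he]
  refine lt_of_le_of_ne (by positivity) fun h => hx ?_
  rw [hxe]
  exact funext fun i => eq_zero_of_sq_add_sum_sq_sub_succ_eq_zero h.symm i i.isLt.le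

end CartanMatrix

theorem Aq_add_transpose (n : ℕ) (q : ℚ) :
    Aq n q + (Aq n q)ᵀ = (q + 1) • (CartanMatrix.A n).map (Int.cast : ℤ → ℚ) := by
  ext i j
  simp only [Aq, CartanMatrix.map_A_apply, Matrix.add_apply, transpose_apply, Matrix.smul_apply,
    smul_eq_mul]
  split_ifs <;> first | omega | ring

theorem Aq_toQuadraticForm'_anisotropic {n : ℕ} {q : ℚ} (hq : q + 1 ≠ 0) :
    (Aq n q).toQuadraticForm'.Anisotropic := by
  intro x hx
  rw [toQuadraticForm'_apply] at hx
  have hA : (q + 1) * ((CartanMatrix.A n).map (Int.cast : ℤ → ℚ)).toQuadraticForm' x = 0 := by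
    rw [toQuadraticForm'_apply, ← smul_eq_mul, ← dotProduct_smul, ← smul_mulVec,
      ← Aq_add_transpose, dotProduct_add_transpose_mulVec, hx, mul_zero]
  exact CartanMatrix.posDef_toQuadraticForm'_map_A.anisotropic x
    ((mul_eq_zero.1 hA).resolve_left hq)

theorem Aq_cone_generators_linearIndependent_general (n : ℕ) (q : ℚ) (hq : 0 < q)
    (J K : Finset (Fin n)) (hJK : Disjoint J K) :
    LinearIndependent ℚ
      (Sum.elim (fun i : J => Pi.single (i : Fin n) (1 : ℚ))
        (fun k : K => -(fun i : Fin n => Aq n q i k))) :=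
  (Aq n q).linearIndependent_sumElim_single_neg_col
    (Aq_toQuadraticForm'_anisotropic (add_pos hq one_pos).ne') hJK

theorem Aq_cone_generators_linearIndependent (n : ℕ) (q : ℚ) (hn : 1 ≤ n) (hq : 0 < q)
    (J K : Finset (Fin n)) (hJK : Disjoint J K) :
    LinearIndependent ℚ
      (Sum.elim (fun i : J => Pi.single (i : Fin n) (1 : ℚ))
        (fun k : K => -(fun i : Fin n => Aq n q i k))) :=
  Aq_cone_generators_linearIndependent_general n q hq J K hJK
end

section
/- For disjoint subsets J, K ⊆ {1,...,n} (not both equal to ∅ trivially), the cone σ_{J,K} = cone{e_i : i ∈ J} + cone{-α_k : k ∈ K} in R^n is strongly convex, i.e., contains no nonzero linear subspace (equivalently σ_{J,K} ∩ (-σ_{J,K}) = {0}). -/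
/-- The cone `σ_{J,K} = cone{e_i : i ∈ J} + cone{-α_k : k ∈ K} ⊆ ℝⁿ`,
where `α_k` is the `k`-th column of `A(n,q)`. -/
def sigmaCone (n : ℕ) (q : ℚ) (J K : Finset (Fin n)) : Set (Fin n → ℝ) :=
  {v | ∃ c d : Fin n → ℝ, (∀ i, 0 ≤ c i) ∧ (∀ i, 0 ≤ d i) ∧
    v = (∑ i ∈ J, c i • (Pi.single i (1 : ℝ) : Fin n → ℝ)) +
        ∑ k ∈ K, d k • (-(fun i : Fin n => (Aq n q i k : ℝ)) : Fin n → ℝ)}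

open Matrix

theorem eq_zero_of_le_weighted_mean_on_support {q : ℝ} (hq : 0 ≤ q) {x : ℤ → ℝ}
    (hfin : (Function.support x).Finite) (hx0 : 0 ≤ x)
    (hx : ∀ m, x m ≠ 0 → (q + 1) * x m ≤ x (m + 1) + q * x (m - 1)) : x = 0 := by
  by_contra hne
  -- Maximising `(x m, m)` lexicographically picks the rightmost maximiser of `x`.
  obtain ⟨m, hm, hmax⟩ := hfin.toFinset.exists_max_image (fun m => toLex (x m, m))
    (by simpa [Finset.Nonempty, Function.ne_iff] using hne)
  rw [Set.Finite.mem_toFinset] at hm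
  have hle : ∀ j, x j ≤ x m := fun j => by
    by_cases hj : x j = 0
    · exact hj ▸ hx0 m
    · exact (Prod.Lex.toLex_le_toLex.mp (hmax j (by simpa using hj))).elim le_of_lt (·.1.le)
  have hright : x (m + 1) < x m := by
    by_cases hj : x (m + 1) = 0
    · exact hj ▸ (hx0 m).lt_of_ne' hm
    · rcases Prod.Lex.toLex_le_toLex.mp (hmax (m + 1) (by simpa using hj)) with h | ⟨-, h⟩
      · exact h
      · omega
  nlinarith [hx m hm, hle (m - 1)]

theorem Function.Injective.sum_ite_eq_extend {ι α β : Type*} [Fintype ι] [DecidableEq α]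
    [AddCommMonoid β] {f : ι → α} (hf : f.Injective) (w : ι → β) (a : α) :
    ∑ i, (if f i = a then w i else 0) = Function.extend f w 0 a := by
  classical
  by_cases ha : ∃ i, f i = a
  · obtain ⟨i, rfl⟩ := ha
    simp [hf.eq_iff, hf.extend_apply]
  · rw [Function.extend_apply' _ _ _ ha, Finset.sum_eq_zero fun i _ => if_neg fun h => ha ⟨i, h⟩]
    rfl

noncomputable def zeroExtend {n : ℕ} (w : Fin n → ℝ) : ℤ → ℝ :=
  Function.extend (fun j : Fin n => (j : ℤ)) w 0

section zeroExtend

variable {n : ℕ} (w : Fin n → ℝ)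

theorem coe_fin_injective : Function.Injective (fun j : Fin n => (j : ℤ)) :=
  Nat.cast_injective.comp Fin.val_injective

@[simp] theorem zeroExtend_coe (j : Fin n) : zeroExtend w j = w j :=
  coe_fin_injective.extend_apply w 0 j

theorem zeroExtend_of_ne_zero {m : ℤ} (hm : zeroExtend w m ≠ 0) : ∃ j : Fin n, (j : ℤ) = m := by
  by_contra h
  exact hm (Function.extend_apply' _ _ _ h)

theorem zeroExtend_nonneg (hw : 0 ≤ w) : 0 ≤ zeroExtend w := fun m => by
  by_cases hm : zeroExtend w m = 0
  · exact hm.ge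
  · obtain ⟨j, rfl⟩ := zeroExtend_of_ne_zero w hm
    simpa using hw j

theorem finite_support_zeroExtend : (Function.support (zeroExtend w)).Finite :=
  (Set.finite_range fun j : Fin n => (j : ℤ)).subset fun _ hm => zeroExtend_of_ne_zero w hm

end zeroExtend

theorem cast_Aq_apply (n : ℕ) (q : ℚ) (i j : Fin n) :
    (Aq n q i j : ℝ) = (q + 1) * (if (j : ℤ) = i then 1 else 0)
      - (if (j : ℤ) = i + 1 then 1 else 0) - q * (if (j : ℤ) = i - 1 then 1 else 0) := by
  unfold Aq
  split_ifs <;> first | omega | (push_cast; ring)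

theorem Aq_mulVec_apply (n : ℕ) (q : ℚ) (w : Fin n → ℝ) (i : Fin n) :
    ((Aq n q).map (↑) *ᵥ w) i
      = (q + 1) * zeroExtend w i - zeroExtend w (i + 1) - q * zeroExtend w (i - 1) := by
  simp only [mulVec, dotProduct, map_apply, cast_Aq_apply, sub_mul, mul_assoc,
    ite_mul, one_mul, zero_mul, Finset.sum_sub_distrib, ← Finset.mul_sum, zeroExtend,
    coe_fin_injective.sum_ite_eq_extend]

theorem eq_zero_of_nonneg_of_Aq_mulVec_nonpos {n : ℕ} {q : ℚ} (hq : 0 ≤ q) {w : Fin n → ℝ}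
    (hw : 0 ≤ w) (hAw : ∀ k, w k ≠ 0 → ((Aq n q).map (↑) *ᵥ w) k ≤ 0) : w = 0 := by
  have hext : zeroExtend w = 0 := by
    refine eq_zero_of_le_weighted_mean_on_support (Rat.cast_nonneg.mpr hq)
      (finite_support_zeroExtend w) (zeroExtend_nonneg w hw) fun m hm => ?_
    obtain ⟨k, rfl⟩ := zeroExtend_of_ne_zero w hm
    have := hAw k (by simpa using hm)
    rw [Aq_mulVec_apply] at this
    linarith
  funext k
  simpa using congrFun hext k

theorem exists_eq_sub_mulVec_of_mem_sigmaCone {n : ℕ} {q : ℚ} {J K : Finset (Fin n)}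
    {v : Fin n → ℝ} (hv : v ∈ sigmaCone n q J K) :
    ∃ c d : Fin n → ℝ, 0 ≤ c ∧ 0 ≤ d ∧ (∀ j ∉ J, c j = 0) ∧ (∀ k ∉ K, d k = 0) ∧
      v = c - (Aq n q).map (↑) *ᵥ d := by
  classical
  obtain ⟨c, d, hc, hd, rfl⟩ := hv
  refine ⟨fun j => if j ∈ J then c j else 0, fun k => if k ∈ K then d k else 0,
    fun j => ?_, fun k => ?_, fun j hj => if_neg hj, fun k hk => if_neg hk, ?_⟩
  · dsimp only; split_ifs <;> simp [hc j]
  · dsimp only; split_ifs <;> simp [hd k]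
  ext j
  simp [Finset.sum_apply, Pi.single_apply, mulVec, dotProduct, mul_comm, sub_eq_add_neg]

theorem sigmaCone_strongly_convex_general (n : ℕ) (q : ℚ) (hq : 0 < q)
    (J K : Finset (Fin n)) (hJK : Disjoint J K) (v : Fin n → ℝ)
    (hv : v ∈ sigmaCone n q J K) (hv' : -v ∈ sigmaCone n q J K) : v = 0 := by
  obtain ⟨c, d, hc, hd, hcJ, hdK, rfl⟩ := exists_eq_sub_mulVec_of_mem_sigmaCone hv
  obtain ⟨c', d', hc', hd', hc'J, hd'K, hv'⟩ := exists_eq_sub_mulVec_of_mem_sigmaCone hv'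
  have hbalance : (Aq n q).map (↑) *ᵥ (d + d') = c + c' := by
    rw [mulVec_add]
    linear_combination hv'
  have hdd' : d + d' = 0 := by
    refine eq_zero_of_nonneg_of_Aq_mulVec_nonpos hq.le (add_nonneg hd hd') fun k hk => ?_
    have hkK : k ∈ K := by
      by_contra hkK
      simp [hdK k hkK, hd'K k hkK] at hk
    have hkJ : k ∉ J := Finset.disjoint_right.mp hJK hkK
    simp [hbalance, hcJ k hkJ, hc'J k hkJ]
  have hcc' : c + c' = 0 := by rw [← hbalance, hdd', mulVec_zero]
  obtain ⟨rfl, -⟩ := (add_eq_zero_iff_of_nonneg hc hc').mp hcc'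
  obtain ⟨rfl, -⟩ := (add_eq_zero_iff_of_nonneg hd hd').mp hdd'
  rw [mulVec_zero, sub_zero]

theorem sigmaCone_strongly_convex (n : ℕ) (q : ℚ) (hn : 1 ≤ n) (hq : 0 < q)
    (J K : Finset (Fin n)) (hJK : Disjoint J K) (v : Fin n → ℝ)
    (hv : v ∈ sigmaCone n q J K) (hv' : -v ∈ sigmaCone n q J K) : v = 0 :=
  sigmaCone_strongly_convex_general n q hq J K hJK v hv hv'
end
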